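/- arXiv:1909.01103 — 8 statements merged into one kernel-verified Lean document; each statement's English description precedes it below -/
import Mathlib

section
/- For all α > 0, θ > 0 and β > 0, the extended xgamma density integrates to one: ∫₀^∞ (θ^(α+1)/((θ+β)·Γ(α+2))) · (α² + α + θ·β·x²) · exp(−θ·x) · x^(α−1) dx = 1. -/
/-!
The EXg density is the two-component mixture
`θ/(θ+β) · Gamma(α, θ) + β/(θ+β) · Gamma(α+2, θ)` of Gamma densities with rate `θ`:
the factor `α² + α = Γ(α+2)/Γ(α)` turns the first summand into the `Gamma(α, θ)` density, and
`θβx²` raises the shape of the second to `α + 2`. Both Gamma densities integrate to one, and the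
mixture weights sum to one.
-/

open MeasureTheory Real

open ProbabilityTheory Set

lemma setIntegral_Ioi_gammaPDFReal {a r : ℝ} (ha : 0 < a) (hr : 0 < r) :
    ∫ x in Ioi 0, gammaPDFReal a r x = 1 := by
  have hΓ : Gamma a ≠ 0 := (Gamma_pos_of_pos ha).ne'
  calc ∫ x in Ioi 0, gammaPDFReal a r x
      = ∫ x in Ioi 0, r ^ a / Gamma a * (x ^ (a - 1) * exp (-(r * x))) :=
        setIntegral_congr_fun measurableSet_Ioi fun x hx => by
          rw [gammaPDFReal, if_pos (le_of_lt hx), mul_assoc]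
    _ = r ^ a / Gamma a * ((1 / r) ^ a * Gamma a) := by
        rw [integral_const_mul, integral_rpow_mul_exp_neg_mul_Ioi ha hr]
    _ = 1 := by
        rw [div_rpow zero_le_one hr.le, one_rpow]
        field_simp

lemma integrableOn_Ioi_gammaPDFReal {a r : ℝ} (ha : 0 < a) (hr : 0 < r) :
    IntegrableOn (gammaPDFReal a r) (Ioi 0) :=
  Integrable.of_integral_ne_zero (by rw [setIntegral_Ioi_gammaPDFReal ha hr]; exact one_ne_zero)

lemma Gamma_add_two {s : ℝ} (hs : s ≠ 0) (hs' : s + 1 ≠ 0) :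
    Gamma (s + 2) = (s + 1) * s * Gamma s := by
  rw [show s + 2 = s + 1 + 1 by ring, Gamma_add_one hs', Gamma_add_one hs, mul_assoc]

lemma exg_integrand_eq_gammaPDFReal_mixture {α θ β x : ℝ} (hα : 0 < α) (hθ : 0 < θ)
    (hθβ : θ + β ≠ 0) (hx : 0 < x) :
    (θ ^ (α + 1) / ((θ + β) * Gamma (α + 2))) * (α ^ 2 + α + θ * β * x ^ 2) *
        exp (-θ * x) * x ^ (α - 1) =
      θ / (θ + β) * gammaPDFReal α θ x + β / (θ + β) * gammaPDFReal (α + 2) θ x := by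
  have hΓ : Gamma α ≠ 0 := (Gamma_pos_of_pos hα).ne'
  have hθα1 : θ ^ (α + 1) = θ ^ α * θ := rpow_add_one hθ.ne' α
  have hθα2 : θ ^ (α + 2) = θ ^ α * θ ^ 2 := by rw [rpow_add hθ, rpow_two]
  have hxα : x ^ (α + 2 - 1) = x ^ (α - 1) * x ^ 2 := by
    rw [show α + 2 - 1 = α - 1 + 2 by ring, rpow_add hx, rpow_two]
  rw [gammaPDFReal, gammaPDFReal, if_pos hx.le, if_pos hx.le,
    Gamma_add_two hα.ne' (by positivity), hθα1, hθα2, hxα, neg_mul]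
  field_simp

/-- The extended xgamma density integrates to one. -/
theorem exg_density_integrates_to_one (α θ β : ℝ) (hα : 0 < α) (hθ : 0 < θ) (hβ : 0 < β) :
    ∫ x in Set.Ioi (0 : ℝ),
      (θ ^ (α + 1) / ((θ + β) * Real.Gamma (α + 2))) * (α ^ 2 + α + θ * β * x ^ 2) *
        Real.exp (-θ * x) * x ^ (α - 1) = 1 := by
  have hθβ : θ + β ≠ 0 := by positivity
  have hα2 : 0 < α + 2 := by positivity
  rw [setIntegral_congr_fun measurableSet_Ioi fun x hx =>
      exg_integrand_eq_gammaPDFReal_mixture hα hθ hθβ hx,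
    integral_add ((integrableOn_Ioi_gammaPDFReal hα hθ).const_mul _)
      ((integrableOn_Ioi_gammaPDFReal hα2 hθ).const_mul _),
    integral_const_mul, integral_const_mul, setIntegral_Ioi_gammaPDFReal hα hθ,
    setIntegral_Ioi_gammaPDFReal hα2 hθ]
  field_simp
end

section
/- For all α > 0, θ > 0, β > 0 and x > 0, the extended xgamma density is the finite mixture (θ/(θ+β)) · g(x; α, θ) + (β/(θ+β)) · g(x; α+2, θ), where g(x; a, θ) = (θ^a/Γ(a)) · x^(a−1) · e^(−θx) is the gamma density with shape a and rate θ; that is, (θ^(α+1)/((θ+β)·Γ(α+2))) · (α² + α + θ·β·x²) · e^(−θx) · x^(α−1) = (θ/(θ+β)) · (θ^α/Γ(α)) · x^(α−1) · e^(−θx) + (β/(θ+β)) · (θ^(α+2)/Γ(α+2)) · x^(α+1) · e^(−θx). -/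
open Real

/-- The extended xgamma density is a finite mixture of the gamma densities with
shapes `α` and `α + 2` and rate `θ`, with mixing weights `θ/(θ+β)` and `β/(θ+β)`. -/
theorem exg_density_mixture (α θ β x : ℝ) (hα : 0 < α) (hθ : 0 < θ) (hβ : 0 < β)
    (hx : 0 < x) :
    (θ ^ (α + 1) / ((θ + β) * Real.Gamma (α + 2))) * (α ^ 2 + α + θ * β * x ^ 2) *
        Real.exp (-θ * x) * x ^ (α - 1)
      = (θ / (θ + β)) * (θ ^ α / Real.Gamma α) * x ^ (α - 1) * Real.exp (-θ * x)
        + (β / (θ + β)) * (θ ^ (α + 2) / Real.Gamma (α + 2)) * x ^ (α + 1) * Real.exp (-θ * x) := by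
  have hG1 : Real.Gamma (α + 1) = α * Real.Gamma α := Real.Gamma_add_one hα.ne'
  have hG2 : Real.Gamma (α + 2) = (α + 1) * (α * Real.Gamma α) := by
    have := Real.Gamma_add_one (show α + 1 ≠ 0 by positivity)
    rw [show α + 2 = α + 1 + 1 by ring, this, hG1]
  have hGpos : 0 < Real.Gamma α := Real.Gamma_pos_of_pos hα
  have hθ1 : θ ^ (α + 1) = θ ^ α * θ := Real.rpow_add_one hθ.ne' α
  have hθ2 : θ ^ (α + 2) = θ ^ α * θ ^ (2:ℕ) := by
    rw [show α + 2 = α + (2:ℕ) by push_cast; ring, Real.rpow_add hθ, Real.rpow_natCast]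
  have hx2 : x ^ (α + 1) = x ^ (α - 1) * x ^ (2:ℕ) := by
    rw [show α + 1 = (α - 1) + (2:ℕ) by push_cast; ring, Real.rpow_add hx, Real.rpow_natCast]
  rw [hG2, hθ1, hθ2, hx2]
  have h1 : θ + β ≠ 0 := by positivity
  have h2 : (α + 1) * (α * Real.Gamma α) ≠ 0 := by positivity
  field_simp
end

section
/- For all α > 0, θ > 0, β > 0 and x > 0, the cumulative distribution function of the extended xgamma distribution satisfies ∫₀^x f(u; α, θ, β) du = (θ/(θ+β)) · γ_l(α, θx)/Γ(α) + (β/(θ+β)) · γ_l(α+2, θx)/Γ(α+2), where γ_l(s, y) = ∫₀^y u^(s−1) e^(−u) du is the lower incomplete gamma function. -/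
open MeasureTheory Real

lemma exg_key (a θ x : ℝ) (ha : -1 < a) (hθ : 0 < θ) (hx : 0 ≤ x) :
    ∫ u in (0:ℝ)..(θ*x), u ^ a * Real.exp (-u)
      = θ ^ (a+1) * ∫ u in (0:ℝ)..x, u ^ a * Real.exp (-θ*u) := by
  have h0 : (θ:ℝ) * 0 = 0 := by ring
  have h1 := intervalIntegral.smul_integral_comp_mul_left
    (fun v => v ^ a * Real.exp (-v)) θ (a := 0) (b := x)
  rw [h0] at h1
  rw [← h1]
  have h2 : Set.EqOn (fun u : ℝ => (θ*u) ^ a * Real.exp (-(θ*u)))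
      (fun u : ℝ => θ ^ a * (u ^ a * Real.exp (-θ*u))) (Set.uIcc 0 x) := by
    intro u hu
    rw [Set.uIcc_of_le hx] at hu
    simp only [Real.mul_rpow hθ.le hu.1]
    ring_nf
  rw [intervalIntegral.integral_congr h2, intervalIntegral.integral_const_mul,
    smul_eq_mul, ← mul_assoc, Real.rpow_add_one hθ.ne']
  ring

/-- The CDF of the extended xgamma distribution, expressed via the lower
incomplete gamma function `γ_l(s, y) = ∫₀^y u^(s-1) e^(-u) du`. -/
theorem exg_cdf (α θ β x : ℝ) (hα : 0 < α) (hθ : 0 < θ) (hβ : 0 < β) (hx : 0 < x) :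
    ∫ u in (0 : ℝ)..x,
        (θ ^ (α + 1) / ((θ + β) * Real.Gamma (α + 2))) * (α ^ 2 + α + θ * β * u ^ 2) *
          Real.exp (-θ * u) * u ^ (α - 1)
      = (θ / (θ + β)) * (∫ u in (0 : ℝ)..(θ * x), u ^ (α - 1) * Real.exp (-u)) / Real.Gamma α
        + (β / (θ + β)) * (∫ u in (0 : ℝ)..(θ * x), u ^ (α + 2 - 1) * Real.exp (-u)) /
            Real.Gamma (α + 2) := by
  have ha1 : -1 < α - 1 := by linarith
  have ha2 : -1 < α + 1 := by linarith
  have hGα : Real.Gamma α ≠ 0 := Real.Gamma_ne_zero (by intro n; nlinarith [Nat.cast_nonneg (α := ℝ) n])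
  have hG2 : Real.Gamma (α + 2) = (α+1) * α * Real.Gamma α := by
    have : α + 2 = (α + 1) + 1 := by ring
    rw [this, Real.Gamma_add_one (by positivity), Real.Gamma_add_one hα.ne']
    ring
  set C := θ ^ (α + 1) / ((θ + β) * Real.Gamma (α + 2)) with hC
  have hint1 : IntervalIntegrable (fun u : ℝ => u ^ (α-1) * Real.exp (-θ*u)) volume 0 x :=
    (intervalIntegral.intervalIntegrable_rpow' ha1).mul_continuousOn
      (Continuous.continuousOn (by continuity))
  have hint2 : IntervalIntegrable (fun u : ℝ => u ^ (α+1) * Real.exp (-θ*u)) volume 0 x :=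
    (intervalIntegral.intervalIntegrable_rpow' ha2).mul_continuousOn
      (Continuous.continuousOn (by continuity))
  have heq : Set.EqOn
      (fun u : ℝ => C * (α ^ 2 + α + θ * β * u ^ 2) * Real.exp (-θ * u) * u ^ (α - 1))
      (fun u : ℝ => (C * (α^2 + α)) * (u ^ (α-1) * Real.exp (-θ*u))
        + (C * (θ*β)) * (u ^ (α+1) * Real.exp (-θ*u))) (Set.uIcc 0 x) := by
    intro u hu
    rw [Set.uIcc_of_le hx.le] at hu
    rcases eq_or_lt_of_le hu.1 with h | h
    · simp only [← h]
      rw [Real.zero_rpow (by positivity : α + 1 ≠ 0)]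
      ring
    · have : u ^ (2:ℕ) * u ^ (α-1) = u ^ (α+1) := by
        rw [← Real.rpow_natCast u 2, ← Real.rpow_add h]
        push_cast
        ring_nf
      simp only []
      rw [← this]
      ring
  rw [intervalIntegral.integral_congr heq,
    intervalIntegral.integral_add (hint1.const_mul _) (hint2.const_mul _),
    intervalIntegral.integral_const_mul, intervalIntegral.integral_const_mul,
    exg_key (α-1) θ x ha1 hθ hx.le,
    show α + 2 - 1 = α + 1 by ring,
    exg_key (α+1) θ x ha2 hθ hx.le]
  have h1 : α - 1 + 1 = α := by ring
  have h2 : α + 1 + 1 = α + 2 := by ring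
  rw [h1, h2, hC, hG2]
  have hθα : θ ^ (α+2) = θ^α * θ^(2:ℝ) := by rw [← Real.rpow_add hθ]
  have hθα1 : θ ^ (α+1) = θ^α * θ := by rw [← Real.rpow_add_one hθ.ne']
  rw [hθα, hθα1]
  have hθ2 : θ ^ (2:ℝ) = θ * θ := by
    rw [show (2:ℝ) = (2:ℕ) by norm_num, Real.rpow_natCast]; ring
  rw [hθ2]
  field_simp
end

section
/- For all α > 0, θ > 0, β > 0 and t > 0, the survival function of the extended xgamma distribution satisfies ∫_t^∞ f(u; α, θ, β) du = (θ/(θ+β)) · Γ_u(α, θt)/Γ(α) + (β/(θ+β)) · Γ_u(α+2, θt)/Γ(α+2), where Γ_u(s, y) = ∫_y^∞ u^(s−1) e^(−u) du is the upper incomplete gamma function. -/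
open MeasureTheory Real Set

set_option maxHeartbeats 800000

lemma keyInt (s θ t : ℝ) (hs : 0 < s) (hθ : 0 < θ) (ht : 0 < t) :
    IntegrableOn (fun u : ℝ => u ^ (s - 1) * Real.exp (-θ * u)) (Set.Ioi t) := by
  have h1 : IntegrableOn (fun x : ℝ => Real.exp (-x) * x ^ (s - 1)) (Ioi (θ * t)) :=
    (Real.GammaIntegral_convergent hs).mono_set (Ioi_subset_Ioi (by positivity))
  have h2 : IntegrableOn (fun u : ℝ => Real.exp (-(θ * u)) * (θ * u) ^ (s - 1)) (Ioi t) :=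
    (integrableOn_Ioi_comp_mul_left_iff _ t hθ).mpr h1
  have h3 := h2.const_mul (θ ^ (s - 1))⁻¹
  refine IntegrableOn.congr_fun h3 (fun x hx => ?_) measurableSet_Ioi
  have hx0 : 0 < x := ht.trans hx
  simp only [Real.mul_rpow hθ.le hx0.le, neg_mul]
  field_simp

lemma key (s θ t : ℝ) (hs : 0 < s) (hθ : 0 < θ) (ht : 0 < t) :
    ∫ u in Set.Ioi (θ * t), u ^ (s - 1) * Real.exp (-u)
      = θ ^ s * ∫ u in Set.Ioi t, u ^ (s - 1) * Real.exp (-θ * u) := by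
  have h := integral_comp_mul_left_Ioi (fun x : ℝ => x ^ (s - 1) * Real.exp (-x)) t hθ
  rw [smul_eq_mul] at h
  have h2 : ∫ x in Ioi t, (θ * x) ^ (s - 1) * Real.exp (-(θ * x))
      = θ ^ (s - 1) * ∫ u in Set.Ioi t, u ^ (s - 1) * Real.exp (-θ * u) := by
    rw [← integral_const_mul]
    apply setIntegral_congr_fun measurableSet_Ioi
    intro x hx
    have hx0 : 0 < x := ht.trans hx
    simp only [Real.mul_rpow hθ.le hx0.le, neg_mul]
    ring
  rw [h2] at h
  have hpow : θ * θ ^ (s - 1) = θ ^ s := by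
    nth_rewrite 1 [← Real.rpow_one θ]
    rw [← Real.rpow_add hθ]; norm_num
  rw [← hpow, mul_assoc, h, ← mul_assoc, mul_inv_cancel₀ hθ.ne', one_mul]

/-- The survival function of the extended xgamma distribution, expressed via the
upper incomplete gamma function `Γ_u(s, y) = ∫_y^∞ u^(s-1) e^(-u) du`. -/
theorem exg_survival (α θ β t : ℝ) (hα : 0 < α) (hθ : 0 < θ) (hβ : 0 < β) (ht : 0 < t) :
    ∫ u in Set.Ioi t,
        (θ ^ (α + 1) / ((θ + β) * Real.Gamma (α + 2))) * (α ^ 2 + α + θ * β * u ^ 2) *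
          Real.exp (-θ * u) * u ^ (α - 1)
      = (θ / (θ + β)) * (∫ u in Set.Ioi (θ * t), u ^ (α - 1) * Real.exp (-u)) / Real.Gamma α
        + (β / (θ + β)) * (∫ u in Set.Ioi (θ * t), u ^ (α + 2 - 1) * Real.exp (-u)) /
            Real.Gamma (α + 2) := by
  have hα2 : (0:ℝ) < α + 2 := by linarith
  have hG : 0 < Real.Gamma α := Real.Gamma_pos_of_pos hα
  have hG2 : Real.Gamma (α + 2) = (α + 1) * α * Real.Gamma α := by
    rw [show α + 2 = (α + 1) + 1 by ring, Real.Gamma_add_one (by positivity),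
      Real.Gamma_add_one hα.ne']
    ring
  have hI1 := keyInt α θ t hα hθ ht
  have hI2 := keyInt (α + 2) θ t hα2 hθ ht
  rw [key α θ t hα hθ ht, key (α + 2) θ t hα2 hθ ht]
  have hL : ∫ u in Set.Ioi t,
        (θ ^ (α + 1) / ((θ + β) * Real.Gamma (α + 2))) * (α ^ 2 + α + θ * β * u ^ 2) *
          Real.exp (-θ * u) * u ^ (α - 1)
      = (θ ^ (α + 1) / ((θ + β) * Real.Gamma (α + 2))) *
          ((α ^ 2 + α) * (∫ u in Set.Ioi t, u ^ (α - 1) * Real.exp (-θ * u))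
            + θ * β * (∫ u in Set.Ioi t, u ^ (α + 2 - 1) * Real.exp (-θ * u))) := by
    rw [← integral_const_mul (α ^ 2 + α), ← integral_const_mul (θ * β),
      ← integral_add (hI1.const_mul _) (hI2.const_mul _), ← integral_const_mul]
    apply setIntegral_congr_fun measurableSet_Ioi
    intro x hx
    have hx0 : 0 < x := ht.trans hx
    have hxp : x ^ (α - 1) * x ^ (2:ℕ) = x ^ (α + 2 - 1) := by
      rw [← Real.rpow_natCast x 2, ← Real.rpow_add hx0]
      ring_nf
    simp only
    rw [← hxp]
    push_cast
    ring
  rw [hL]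
  have hp1 : θ ^ (α + 1) = θ ^ α * θ := by rw [Real.rpow_add hθ, Real.rpow_one]
  have hp2 : θ ^ (α + 2) = θ ^ α * (θ * θ) := by
    rw [Real.rpow_add hθ, show (2:ℝ) = ((2:ℕ):ℝ) by norm_num, Real.rpow_natCast]
    ring
  rw [hp1, hp2, hG2]
  have hθβ : θ + β ≠ 0 := by positivity
  field_simp
end

section
/- For all α > 0, θ > 0, β > 0 and every real r > 0, the rth raw moment of the extended xgamma distribution is ∫₀^∞ x^r · f(x; α, θ, β) dx = (Γ(α+r)/(θ^r · (θ+β) · Γ(α+2))) · (θ·α·(α+1) + β·(α+r)·(α+r+1)). -/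
open MeasureTheory Real

/-!
With the normalising constant pulled out and `s = α + r`, the integrand is
`(α² + α) x^(s-1) e^(-θx) + θβ x^(s+1) e^(-θx)`, a combination of two gamma kernels whose
integrals are `Γ(s)/θ^s` and `s(s+1)Γ(s)/θ^(s+2)`.
-/

section GammaKernel

variable {θ s : ℝ}

theorem integrableOn_rpow_sub_one_mul_exp_neg_mul (hs : 0 < s) (hθ : 0 < θ) :
    IntegrableOn (fun x : ℝ ↦ x ^ (s - 1) * exp (-(θ * x))) (Set.Ioi 0) :=
  .of_integral_ne_zero (by rw [integral_rpow_mul_exp_neg_mul_Ioi hs hθ]; positivity)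

theorem integral_rpow_add_one_mul_exp_neg_mul_Ioi (hs : 0 < s) (hθ : 0 < θ) :
    ∫ x in Set.Ioi (0 : ℝ), x ^ (s + 1) * exp (-(θ * x)) =
      s * (s + 1) / θ ^ 2 * ((1 / θ) ^ s * Gamma s) := by
  have h := integral_rpow_mul_exp_neg_mul_Ioi (a := s + 2) (by linarith) hθ
  rw [show s + 2 - 1 = s + 1 by ring] at h
  rw [h, show s + 2 = s + 1 + 1 by ring, Gamma_add_one (by positivity), Gamma_add_one hs.ne',
    rpow_add (by positivity), rpow_add (by positivity), rpow_one]
  field_simp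

theorem integral_quadratic_mul_rpow_mul_exp_neg_mul_Ioi (a b : ℝ) (hs : 0 < s) (hθ : 0 < θ) :
    ∫ x in Set.Ioi (0 : ℝ), (a + b * x ^ 2) * (x ^ (s - 1) * exp (-(θ * x))) =
      Gamma s / θ ^ s * (a + b * s * (s + 1) / θ ^ 2) := by
  have hsplit : ∀ x ∈ Set.Ioi (0 : ℝ), (a + b * x ^ 2) * (x ^ (s - 1) * exp (-(θ * x))) =
      a * (x ^ (s - 1) * exp (-(θ * x))) + b * (x ^ (s + 1) * exp (-(θ * x))) := by
    intro x (hx : 0 < x)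
    have : x ^ 2 * x ^ (s - 1) = x ^ (s + 1) := by
      rw [← rpow_natCast, ← rpow_add hx]; ring_nf
    linear_combination b * exp (-(θ * x)) * this
  have hint : IntegrableOn (fun x : ℝ ↦ x ^ (s + 1) * exp (-(θ * x))) (Set.Ioi 0) := by
    have h := integrableOn_rpow_sub_one_mul_exp_neg_mul (s := s + 2) (by linarith) hθ
    rwa [show s + 2 - 1 = s + 1 by ring] at h
  rw [setIntegral_congr_fun measurableSet_Ioi hsplit,
    integral_add ((integrableOn_rpow_sub_one_mul_exp_neg_mul hs hθ).const_mul a) (hint.const_mul b),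
    integral_const_mul, integral_const_mul, integral_rpow_mul_exp_neg_mul_Ioi hs hθ,
    integral_rpow_add_one_mul_exp_neg_mul_Ioi hs hθ, div_rpow zero_le_one hθ.le, one_rpow]
  ring

end GammaKernel

theorem exg_raw_moment_general (α θ β r : ℝ) (hα : 0 < α) (hθ : 0 < θ) (hr : 0 < r) :
    ∫ x in Set.Ioi (0 : ℝ),
        x ^ r * ((θ ^ (α + 1) / ((θ + β) * Real.Gamma (α + 2))) * (α ^ 2 + α + θ * β * x ^ 2) *
          Real.exp (-θ * x) * x ^ (α - 1))
      = (Real.Gamma (α + r) / (θ ^ r * (θ + β) * Real.Gamma (α + 2))) *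
          (θ * α * (α + 1) + β * (α + r) * (α + r + 1)) := by
  have hmerge : ∀ x ∈ Set.Ioi (0 : ℝ),
      x ^ r * (θ ^ (α + 1) / ((θ + β) * Gamma (α + 2)) * (α ^ 2 + α + θ * β * x ^ 2) *
          exp (-θ * x) * x ^ (α - 1)) =
        θ ^ (α + 1) / ((θ + β) * Gamma (α + 2)) *
          ((α ^ 2 + α + θ * β * x ^ 2) * (x ^ (α + r - 1) * exp (-(θ * x)))) := by
    intro x (hx : 0 < x)
    rw [show α + r - 1 = r + (α - 1) by ring, rpow_add hx, neg_mul]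
    ring
  have hθpow : θ ^ (α + r) = θ ^ (α + 1) * θ ^ r / θ := by
    rw [eq_div_iff hθ.ne', ← rpow_add_one hθ.ne', ← rpow_add hθ]
    ring_nf
  rw [setIntegral_congr_fun measurableSet_Ioi hmerge, integral_const_mul,
    integral_quadratic_mul_rpow_mul_exp_neg_mul_Ioi _ _ (by linarith) hθ, hθpow]
  field_simp

/-- The `r`th raw moment of the extended xgamma distribution. -/
theorem exg_raw_moment (α θ β r : ℝ) (hα : 0 < α) (hθ : 0 < θ) (hβ : 0 < β) (hr : 0 < r) :
    ∫ x in Set.Ioi (0 : ℝ),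
        x ^ r * ((θ ^ (α + 1) / ((θ + β) * Real.Gamma (α + 2))) * (α ^ 2 + α + θ * β * x ^ 2) *
          Real.exp (-θ * x) * x ^ (α - 1))
      = (Real.Gamma (α + r) / (θ ^ r * (θ + β) * Real.Gamma (α + 2))) *
          (θ * α * (α + 1) + β * (α + r) * (α + r + 1)) :=
  exg_raw_moment_general α θ β r hα hθ hr
end

section
/- For all α > 0, θ > 0 and β > 0, the mean of the extended xgamma distribution is ∫₀^∞ x · f(x; α, θ, β) dx = (θ·α + β·(α+2)) / (θ·(θ+β)). -/
open MeasureTheory Real Set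

/-! Multiplying the density by `x` leaves a combination of the gamma kernels `x ^ α * exp (-θ x)`
and `x ^ (α + 2) * exp (-θ x)`, whose integrals over `(0, ∞)` are `Γ(α + 1) / θ ^ (α + 1)` and
`Γ(α + 3) / θ ^ (α + 3)`. The recurrence `Γ(s + 1) = s Γ(s)` expresses both through `Γ(α + 1)`,
which cancels against the normalising constant. -/

lemma integrableOn_rpow_mul_exp_neg_mul_Ioi {s θ : ℝ} (hs : -1 < s) (hθ : 0 < θ) :
    IntegrableOn (fun x : ℝ => x ^ s * exp (-θ * x)) (Ioi 0) := by
  simpa using integrableOn_rpow_mul_exp_neg_mul_rpow hs one_pos hθ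

lemma integral_rpow_mul_exp_neg_mul_Ioi_eq_Gamma_div {s θ : ℝ} (hs : -1 < s) (hθ : 0 < θ) :
    ∫ x in Ioi 0, x ^ s * exp (-θ * x) = Gamma (s + 1) / θ ^ (s + 1) := by
  have h := integral_rpow_mul_exp_neg_mul_Ioi (a := s + 1) (by linarith) hθ
  rw [add_sub_cancel_right, div_rpow zero_le_one hθ.le, one_rpow, one_div_mul_eq_div] at h
  simpa only [neg_mul] using h

lemma integral_mul_quadratic_mul_exp_mul_rpow {α θ : ℝ} (C a c : ℝ) (hα : -1 < α) (hθ : 0 < θ) :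
    ∫ x in Ioi 0, x * (C * (a + c * x ^ 2) * exp (-θ * x) * x ^ (α - 1))
      = C * (a * (Gamma (α + 1) / θ ^ (α + 1)) + c * (Gamma (α + 3) / θ ^ (α + 3))) := by
  have h_eq : EqOn (fun x : ℝ => x * (C * (a + c * x ^ 2) * exp (-θ * x) * x ^ (α - 1)))
      (fun x => C * (a * (x ^ α * exp (-θ * x)) + c * (x ^ (α + 2) * exp (-θ * x)))) (Ioi 0) := by
    intro x (hx : 0 < x)
    have h1 : x ^ α = x * x ^ (α - 1) := by
      conv_lhs => rw [show α = 1 + (α - 1) by ring, rpow_add hx, rpow_one]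
    have h2 : x ^ (α + 2) = x ^ 2 * x ^ α := by
      rw [rpow_add hx, rpow_two, mul_comm]
    simp only [h2, h1]
    ring
  rw [setIntegral_congr_fun measurableSet_Ioi h_eq, integral_const_mul,
    integral_add ((integrableOn_rpow_mul_exp_neg_mul_Ioi hα hθ).const_mul _)
      ((integrableOn_rpow_mul_exp_neg_mul_Ioi (by linarith) hθ).const_mul _),
    integral_const_mul, integral_const_mul,
    integral_rpow_mul_exp_neg_mul_Ioi_eq_Gamma_div hα hθ,
    integral_rpow_mul_exp_neg_mul_Ioi_eq_Gamma_div (by linarith) hθ]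
  norm_num [add_assoc]

theorem exg_mean_general (α θ β : ℝ) (hα : 0 < α) (hθ : 0 < θ) :
    ∫ x in Set.Ioi (0 : ℝ),
        x * ((θ ^ (α + 1) / ((θ + β) * Real.Gamma (α + 2))) * (α ^ 2 + α + θ * β * x ^ 2) *
          Real.exp (-θ * x) * x ^ (α - 1))
      = (θ * α + β * (α + 2)) / (θ * (θ + β)) := by
  rw [integral_mul_quadratic_mul_exp_mul_rpow _ _ _ (by linarith) hθ]
  have hΓ2 : Gamma (α + 2) = (α + 1) * Gamma (α + 1) := by
    rw [show α + 2 = (α + 1) + 1 by ring, Gamma_add_one (by linarith)]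
  have hΓ3 : Gamma (α + 3) = (α + 2) * ((α + 1) * Gamma (α + 1)) := by
    rw [show α + 3 = (α + 2) + 1 by ring, Gamma_add_one (by linarith), hΓ2]
  have hθ3 : θ ^ (α + 3) = θ ^ (α + 1) * θ ^ 2 := by
    rw [show α + 3 = (α + 1) + 2 by ring, rpow_add hθ, rpow_two]
  have hΓ : 0 < Gamma (α + 1) := Gamma_pos_of_pos (by linarith)
  have hP : 0 < θ ^ (α + 1) := rpow_pos_of_pos hθ _
  have h_unnormalized : θ ^ (α + 1) / ((α + 1) * Gamma (α + 1)) *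
      ((α ^ 2 + α) * (Gamma (α + 1) / θ ^ (α + 1)) +
        θ * β * ((α + 2) * ((α + 1) * Gamma (α + 1)) / (θ ^ (α + 1) * θ ^ 2)))
      = (θ * α + β * (α + 2)) / θ := by
    field_simp
  rw [hΓ2, hΓ3, hθ3, mul_comm (θ + β), ← div_div, div_mul_eq_mul_div, h_unnormalized, div_div]

/-- The mean of the extended xgamma distribution. -/
theorem exg_mean (α θ β : ℝ) (hα : 0 < α) (hθ : 0 < θ) (hβ : 0 < β) :
    ∫ x in Set.Ioi (0 : ℝ),
        x * ((θ ^ (α + 1) / ((θ + β) * Real.Gamma (α + 2))) * (α ^ 2 + α + θ * β * x ^ 2) *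
          Real.exp (-θ * x) * x ^ (α - 1))
      = (θ * α + β * (α + 2)) / (θ * (θ + β)) :=
  exg_mean_general α θ β hα hθ
end

section
/- For all α > 0, θ > 0 and β > 0, the second raw moment of the extended xgamma distribution is ∫₀^∞ x² · f(x; α, θ, β) dx = (θ·α·(α+1) + β·(α+2)·(α+3)) / (θ²·(θ+β)). -/
/-!
Multiplying out the density, the second moment is a combination of the Gamma integrals
`∫₀^∞ x^(s-1) e^(-θx) dx = Γ(s) / θ^s` at `s = α + 2` and `s = α + 4`; the recursion
`Γ(α + 4) = (α + 3)(α + 2) Γ(α + 2)` then cancels the normalising constant.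
-/

open MeasureTheory Real

lemma integral_pow_mul_rpow_mul_exp_neg_mul_Ioi {s r : ℝ} (hs : 0 < s) (hr : 0 < r) (n : ℕ) :
    ∫ x in Set.Ioi (0 : ℝ), x ^ n * (x ^ (s - 1) * exp (-(r * x))) = Gamma (s + n) / r ^ (s + n) := by
  have hsn : 0 < s + n := by positivity
  calc ∫ x in Set.Ioi (0 : ℝ), x ^ n * (x ^ (s - 1) * exp (-(r * x)))
      = ∫ x in Set.Ioi (0 : ℝ), x ^ (s + n - 1) * exp (-(r * x)) := by
        refine setIntegral_congr_fun measurableSet_Ioi fun x hx => ?_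
        rw [show s + n - 1 = s - 1 + n by ring, rpow_add_natCast (ne_of_gt hx)]
        ring
    _ = Gamma (s + n) / r ^ (s + n) := by
        rw [integral_rpow_mul_exp_neg_mul_Ioi hsn hr, one_div, inv_rpow hr.le, inv_mul_eq_div]

lemma integrableOn_pow_mul_rpow_mul_exp_neg_mul_Ioi {s r : ℝ} (hs : 0 < s) (hr : 0 < r) (n : ℕ) :
    IntegrableOn (fun x : ℝ => x ^ n * (x ^ (s - 1) * exp (-(r * x)))) (Set.Ioi 0) :=
  .of_integral_ne_zero <| by
    rw [integral_pow_mul_rpow_mul_exp_neg_mul_Ioi hs hr]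
    have := Gamma_pos_of_pos (show 0 < s + n by positivity)
    positivity

lemma Gamma_add_four {s : ℝ} (hs : 0 < s) :
    Gamma (s + 4) = (s + 3) * (s + 2) * Gamma (s + 2) := by
  rw [show s + 4 = s + 2 + 1 + 1 by ring, Gamma_add_one (by positivity),
    Gamma_add_one (by positivity)]
  ring

theorem exg_second_moment_general (α θ β : ℝ) (hα : 0 < α) (hθ : 0 < θ) :
    ∫ x in Set.Ioi (0 : ℝ),
        x ^ 2 * ((θ ^ (α + 1) / ((θ + β) * Real.Gamma (α + 2))) * (α ^ 2 + α + θ * β * x ^ 2) *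
          Real.exp (-θ * x) * x ^ (α - 1))
      = (θ * α * (α + 1) + β * (α + 2) * (α + 3)) / (θ ^ 2 * (θ + β)) := by
  set K := θ ^ (α + 1) / ((θ + β) * Gamma (α + 2))
  have hsplit : ∀ x : ℝ, x ^ 2 * (K * (α ^ 2 + α + θ * β * x ^ 2) * exp (-θ * x) * x ^ (α - 1))
      = K * (α ^ 2 + α) * (x ^ 2 * (x ^ (α - 1) * exp (-(θ * x))))
        + K * (θ * β) * (x ^ 4 * (x ^ (α - 1) * exp (-(θ * x)))) := fun x => by
    rw [neg_mul]; ring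
  simp_rw [hsplit]
  rw [integral_add ((integrableOn_pow_mul_rpow_mul_exp_neg_mul_Ioi hα hθ 2).const_mul _)
      ((integrableOn_pow_mul_rpow_mul_exp_neg_mul_Ioi hα hθ 4).const_mul _),
    integral_const_mul, integral_const_mul, integral_pow_mul_rpow_mul_exp_neg_mul_Ioi hα hθ,
    integral_pow_mul_rpow_mul_exp_neg_mul_Ioi hα hθ]
  push_cast
  have hθ2 : θ ^ (α + 2) = θ ^ (α + 1) * θ := by
    rw [show α + 2 = α + 1 + 1 by ring, rpow_add_one hθ.ne']
  have hθ4 : θ ^ (α + 4) = θ ^ (α + 1) * θ ^ 3 := by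
    rw [show α + 4 = α + 1 + (3 : ℕ) by push_cast; ring, rpow_add_natCast hθ.ne']
  rw [Gamma_add_four hα, hθ2, hθ4]
  simp only [K]
  field_simp

/-- The second raw moment of the extended xgamma distribution. -/
theorem exg_second_moment (α θ β : ℝ) (hα : 0 < α) (hθ : 0 < θ) (hβ : 0 < β) :
    ∫ x in Set.Ioi (0 : ℝ),
        x ^ 2 * ((θ ^ (α + 1) / ((θ + β) * Real.Gamma (α + 2))) * (α ^ 2 + α + θ * β * x ^ 2) *
          Real.exp (-θ * x) * x ^ (α - 1))
      = (θ * α * (α + 1) + β * (α + 2) * (α + 3)) / (θ ^ 2 * (θ + β)) :=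
  exg_second_moment_general α θ β hα hθ
end

section
/- For all α > 0, θ > 0 and β > 0, the probability measure on (0, ∞) with density f(·; α, θ, β) with respect to Lebesgue measure equals the mixture measure (θ/(θ+β)) · Γ(α, θ) + (β/(θ+β)) · Γ(α+2, θ), where Γ(a, θ) denotes the gamma probability measure with shape a and rate θ; consequently, if with probability θ/(θ+β) one sets X = V₁ with V₁ ~ Γ(α, θ) and with probability β/(θ+β) one sets X = V₂ with V₂ ~ Γ(α+2, θ), then X has density f(·; α, θ, β). -/
open MeasureTheory ProbabilityTheory Real

lemma key_real (α θ β x : ℝ) (hα : 0 < α) (hθ : 0 < θ) (hβ : 0 < β) (hx : 0 < x) :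
    (θ ^ (α + 1) / ((θ + β) * Real.Gamma (α + 2))) *
            (α ^ 2 + α + θ * β * x ^ 2) * Real.exp (-θ * x) * x ^ (α - 1)
    = (θ / (θ + β)) * (θ ^ α / Real.Gamma α * x ^ (α - 1) * Real.exp (-(θ * x)))
      + (β / (θ + β)) * (θ ^ (α + 2) / Real.Gamma (α + 2) * x ^ (α + 2 - 1) * Real.exp (-(θ * x))) := by
  have hG : Real.Gamma (α + 2) = (α + 1) * α * Real.Gamma α := by
    have h1 : α + 2 = (α + 1) + 1 := by ring
    rw [h1, Real.Gamma_add_one (by positivity), Real.Gamma_add_one hα.ne']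
    ring
  have hGpos := Real.Gamma_pos_of_pos hα
  have hθα : θ ^ (α + 1) = θ ^ α * θ := by
    rw [Real.rpow_add hθ, Real.rpow_one]
  have hθα2 : θ ^ (α + 2) = θ ^ α * θ ^ 2 := by
    rw [Real.rpow_add hθ, Real.rpow_two]
  have hxα : x ^ (α + 2 - 1) = x ^ (α - 1) * x ^ 2 := by
    have : α + 2 - 1 = (α - 1) + 2 := by ring
    rw [this, Real.rpow_add hx, Real.rpow_two]
  have hexp : Real.exp (-θ * x) = Real.exp (-(θ * x)) := by ring_nf
  rw [hG, hθα, hθα2, hxα, hexp]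
  have h1 : θ + β ≠ 0 := by positivity
  field_simp

/-- The probability measure on `(0, ∞)` with extended xgamma density `f(·; α, θ, β)`
(with respect to Lebesgue measure) is the mixture of the gamma measures with shapes
`α` and `α + 2` and rate `θ`, with mixing weights `θ/(θ+β)` and `β/(θ+β)`.
Consequently, a random variable obtained by choosing `V₁ ~ Γ(α, θ)` with probability
`θ/(θ+β)` and `V₂ ~ Γ(α+2, θ)` with probability `β/(θ+β)` has density `f(·; α, θ, β)`. -/
theorem exg_measure_eq_mixture (α θ β : ℝ) (hα : 0 < α) (hθ : 0 < θ) (hβ : 0 < β) :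
    volume.withDensity (fun x : ℝ =>
        ENNReal.ofReal (Set.indicator (Set.Ioi (0 : ℝ))
          (fun x => (θ ^ (α + 1) / ((θ + β) * Real.Gamma (α + 2))) *
            (α ^ 2 + α + θ * β * x ^ 2) * Real.exp (-θ * x) * x ^ (α - 1)) x))
      = ENNReal.ofReal (θ / (θ + β)) • gammaMeasure α θ
        + ENNReal.ofReal (β / (θ + β)) • gammaMeasure (α + 2) θ := by
  unfold gammaMeasure
  have m1 : Measurable (gammaPDF α θ) := (measurable_gammaPDFReal α θ).ennreal_ofReal
  have m2 : Measurable (gammaPDF (α + 2) θ) := (measurable_gammaPDFReal (α + 2) θ).ennreal_ofReal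
  rw [← withDensity_smul _ m1, ← withDensity_smul _ m2,
      ← withDensity_add_right _ (m2.const_smul _)]
  refine withDensity_congr_ae ?_
  filter_upwards [compl_mem_ae_iff.mpr (measure_singleton (0 : ℝ))] with x hx
  simp only [Set.mem_compl_iff, Set.mem_singleton_iff] at hx
  rcases lt_or_gt_of_ne hx with hneg | hpos
  · have h1 : x ∉ Set.Ioi (0 : ℝ) := by simp [not_lt.mpr hneg.le]
    simp only [Pi.add_apply, Pi.smul_apply, smul_eq_mul, Set.indicator_of_notMem h1,
      gammaPDF_of_neg hneg, ENNReal.ofReal_zero, mul_zero, add_zero]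
  · have hx0 : (0:ℝ) ≤ x := hpos.le
    rw [Set.indicator_of_mem (Set.mem_Ioi.mpr hpos)]
    simp only [Pi.add_apply, Pi.smul_apply, smul_eq_mul, gammaPDF_of_nonneg hx0,
      gammaPDFReal, if_pos hx0]
    rw [← ENNReal.ofReal_mul (by positivity), ← ENNReal.ofReal_mul (by positivity),
      ← ENNReal.ofReal_add (by positivity) (by positivity)]
    exact congrArg ENNReal.ofReal (key_real α θ β x hα hθ hβ hpos)
end
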